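/- A bidirected graph is Markov equivalent to some directed acyclic graph if and only if it contains no induced P4 (path on 4 vertices) and no induced C4 (chordless 4-cycle). -/

import Mathlib

/-- A loopless mixed graph with three kinds of edges: lines (undirected),
arrows (directed, `arrow i j` means `i → j`), and arcs (bidirected). -/
structure MixedGraph (V : Type*) where
  line : V → V → Prop
  arrow : V → V → Prop
  arc : V → V → Prop
  line_symm : ∀ i j, line i j → line j i
  arc_symm : ∀ i j, arc i j → arc j i
  line_irrefl : ∀ i, ¬ line i i
  arrow_irrefl : ∀ i, ¬ arrow i i
  arc_irrefl : ∀ i, ¬ arc i i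

namespace MixedGraph

variable {V : Type*}

/-- `i` and `j` are adjacent (joined by some edge). -/
def adj (G : MixedGraph V) (i j : V) : Prop :=
  G.line i j ∨ G.arrow i j ∨ G.arrow j i ∨ G.arc i j

/-- There is an edge between `i` and `j` with an arrowhead pointing at `j`. -/
def headAt (G : MixedGraph V) (i j : V) : Prop :=
  G.arrow i j ∨ G.arc i j

/-- `j` is a collider on the V-configuration `⟨i, j, k⟩`. -/
def collider (G : MixedGraph V) (i j k : V) : Prop :=
  G.headAt i j ∧ G.headAt k j

/-- `i` is an ancestor of `j` (a direction-preserving path of arrows from `i` to `j`). -/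
def anc (G : MixedGraph V) (i j : V) : Prop :=
  Relation.ReflTransGen G.arrow i j

/-- A path: a list of pairwise distinct nodes, consecutive ones adjacent. -/
def isPath (G : MixedGraph V) (p : List V) : Prop :=
  p.Nodup ∧ List.Chain' G.adj p

/-- Inner-node condition for an `m`-connecting path given `C`:
every collider inner node is in `C` or an ancestor of a node of `C`,
every non-collider inner node is outside `C`. -/
def innerOK (G : MixedGraph V) (C : Set V) : List V → Prop
  | a :: b :: c :: rest =>
      ((G.collider a b c → b ∈ C ∨ ∃ x ∈ C, G.anc b x) ∧
        (¬ G.collider a b c → b ∉ C)) ∧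
      innerOK G C (b :: c :: rest)
  | _ => True

/-- `p` is an `m`-connecting path between `i` and `j` given `C`. -/
def mConnecting (G : MixedGraph V) (C : Set V) (i j : V) (p : List V) : Prop :=
  G.isPath p ∧ 2 ≤ p.length ∧ p.head? = some i ∧ p.getLast? = some j ∧
    G.innerOK C p

/-- `A` is `m`-separated from `B` given `C`. -/
def mSep (G : MixedGraph V) (A B C : Set V) : Prop :=
  ¬ ∃ (i j : V) (p : List V), i ∈ A ∧ j ∈ B ∧ G.mConnecting C i j p

/-- Two mixed graphs on the same node set are Markov equivalent if they induce
exactly the same `m`-separation statements among disjoint sets. -/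
def markovEquiv (G₁ G₂ : MixedGraph V) : Prop :=
  ∀ A B C : Set V, Disjoint A B → Disjoint A C → Disjoint B C →
    (G₁.mSep A B C ↔ G₂.mSep A B C)

/-- An undirected graph: only line edges. -/
def isUG (G : MixedGraph V) : Prop :=
  (∀ i j, ¬ G.arrow i j) ∧ (∀ i j, ¬ G.arc i j)

/-- A bidirected graph: only arc edges. -/
def isBG (G : MixedGraph V) : Prop :=
  (∀ i j, ¬ G.arrow i j) ∧ (∀ i j, ¬ G.line i j)

/-- A directed acyclic graph: only arrows, and no directed cycle. -/
def isDAG (G : MixedGraph V) : Prop :=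
  (∀ i j, ¬ G.line i j) ∧ (∀ i j, ¬ G.arc i j) ∧ ∀ i, ¬ Relation.TransGen G.arrow i i

/-- An ancestral graph: no node is an ancestor of one of its parents or spouses,
and no arrowhead points at a node having a neighbour. -/
def isAncestral (G : MixedGraph V) : Prop :=
  (∀ i j, (G.arrow j i ∨ G.arc j i) → ¬ G.anc i j) ∧
  (∀ i j k, G.line i j → ¬ G.headAt k i)

/-- Maximality: every pair of distinct non-adjacent nodes can be `m`-separated. -/
def isMaximal (G : MixedGraph V) : Prop :=
  ∀ i j, i ≠ j → ¬ G.adj i j → ∃ C : Set V, i ∉ C ∧ j ∉ C ∧ G.mSep {i} {j} C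

/-- A maximal ancestral graph. -/
def isMAG (G : MixedGraph V) : Prop :=
  G.isAncestral ∧ G.isMaximal

/-- Two graphs have the same skeleton. -/
def sameSkeleton (G₁ G₂ : MixedGraph V) : Prop :=
  ∀ i j, G₁.adj i j ↔ G₂.adj i j

/-- An unshielded collider V-configuration `⟨i, j, k⟩`. -/
def unshieldedCollider (G : MixedGraph V) (i j k : V) : Prop :=
  G.collider i j k ∧ i ≠ k ∧ ¬ G.adj i k

end MixedGraph

/-- There are four distinct nodes whose induced subgraph is a path `a - b - c - d`. -/
def inducedP4 {V : Type*} (adj : V → V → Prop) : Prop :=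
  ∃ a b c d : V, a ≠ b ∧ a ≠ c ∧ a ≠ d ∧ b ≠ c ∧ b ≠ d ∧ c ≠ d ∧
    adj a b ∧ adj b c ∧ adj c d ∧ ¬ adj a c ∧ ¬ adj a d ∧ ¬ adj b d

/-- There are four distinct nodes whose induced subgraph is a chordless
four-cycle `a - b - c - d - a`. -/
def inducedC4 {V : Type*} (adj : V → V → Prop) : Prop :=
  ∃ a b c d : V, a ≠ b ∧ a ≠ c ∧ a ≠ d ∧ b ≠ c ∧ b ≠ d ∧ c ≠ d ∧
    adj a b ∧ adj b c ∧ adj c d ∧ adj d a ∧ ¬ adj a c ∧ ¬ adj b d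

/-!
In a bidirected graph every inner node of a path is a collider and is an ancestor only of itself,
so `a` and `b` are m-connected given `C` exactly when some path joins them through `C`.

If `a - b - c - d` is an induced `P₄` or `C₄` and `D` is a Markov equivalent DAG, then every edge
of `G` is an edge of `D` (a DAG separates non-adjacent `x`, `y` by the parents of whichever of
them is not an ancestor of the other), and the separations of `a`, `c` and of `b`, `d` given `∅`
force the colliders `a → b ← c` and `b → c ← d`: a directed 2-cycle.

Without induced `P₄` and `C₄` the closed neighbourhoods of adjacent nodes are nested. Orient
every edge towards the larger closed neighbourhood, breaking ties by an enumeration. Every inner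
node of a chordless path is then a collider, and every path through `C` shortcuts to a chordless
one, which is therefore d-connecting. Conversely, the inclusions `N[x] ⊆ N[y]` along arrows
`x → y` reroute a d-connecting path into a walk through `C`.
-/

namespace List

variable {α : Type*}

def IsChain₃ (R : α → α → α → Prop) : List α → Prop
  | a :: b :: c :: l => R a b c ∧ IsChain₃ R (b :: c :: l)
  | _ => True

variable {R S : α → α → α → Prop}

@[simp]
theorem isChain₃_cons_cons_cons {a b c : α} {l : List α} :
    IsChain₃ R (a :: b :: c :: l) ↔ R a b c ∧ IsChain₃ R (b :: c :: l) :=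
  Iff.rfl

theorem IsChain₃.imp_of_isChain {r : α → α → Prop}
    (h : ∀ a b c, r a b → r b c → R a b c → S a b c) :
    ∀ {l : List α}, l.IsChain r → l.IsChain₃ R → l.IsChain₃ S
  | a :: b :: c :: l, hr, hR => by
    rw [isChain_cons_cons] at hr
    exact ⟨h a b c hr.1 (isChain_cons_cons.1 hr.2).1 hR.1, hR.2.imp_of_isChain h hr.2⟩
  | [], _, _ | [_], _, _ | [_, _], _, _ => trivial

theorem isChain₃_of_nodup {P : α → Prop} :
    ∀ {l : List α} {a b : α}, l.Nodup → l.head? = some a → l.getLast? = some b →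
      (∀ v ∈ l, v = a ∨ P v ∨ v = b) → l.IsChain₃ (fun _ y _ => P y)
  | x :: y :: z :: l, a, b, hnd, ha, hb, hmem => by
    obtain rfl : x = a := by simpa using ha
    rw [getLast?_cons_cons] at hb
    have hx : x ∉ y :: z :: l := (nodup_cons.1 hnd).1
    have hy : y ∉ z :: l := (nodup_cons.1 (nodup_cons.1 hnd).2).1
    have hbz : b ∈ z :: l := mem_of_getLast? (by rwa [getLast?_cons_cons] at hb)
    refine ⟨?_, isChain₃_of_nodup (nodup_cons.1 hnd).2 rfl hb fun v hv => ?_⟩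
    · rcases hmem y (by simp) with rfl | hP | rfl
      · simp at hx
      · exact hP
      · exact absurd hbz hy
    · rcases hmem v (mem_cons_of_mem _ hv) with rfl | hP | rfl
      · exact absurd hv hx
      · exact Or.inr (Or.inl hP)
      · exact Or.inr (Or.inr rfl)
  | [], _, _, _, _, _, _ | [_], _, _, _, _, _, _ | [_, _], _, _, _, _, _, _ => trivial

section Chordless

variable {r : α → α → Prop} {P : α → Prop}

theorem exists_chordless_sublist_cons (a : α) :
    ∀ (t : List α) (y : α), a ∉ y :: t → r a y → (t ≠ [] → P y) → (y :: t).IsChain r →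
      (y :: t).IsChain₃ (fun x y z => P y ∧ x ≠ z ∧ ¬ r x z) →
      ∃ q, q <+ a :: y :: t ∧ q.head? = some a ∧ q.getLast? = (y :: t).getLast? ∧
        q.IsChain r ∧ 2 ≤ q.length ∧ q.IsChain₃ (fun x y z => P y ∧ x ≠ z ∧ ¬ r x z)
  | [], y, _, hay, _, _, _ =>
    ⟨[a, y], Sublist.refl _, rfl, rfl, by simpa using hay, le_rfl, trivial⟩
  | z :: t, y, ha, hay, hy, hch, hq => by
    by_cases haz : r a z
    · obtain ⟨q, hsub, hhead, hlast, hqch, hlen, hqc⟩ :=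
        exists_chordless_sublist_cons a t z (fun h => ha (mem_cons_of_mem _ h)) haz
          (fun ht => by cases t with | nil => exact absurd rfl ht | cons w t => exact hq.1.1)
          hch.tail (by cases t with | nil => trivial | cons => exact hq.2)
      exact ⟨q, hsub.trans ((sublist_cons_self y _).cons_cons a), hhead, by simpa using hlast, hqch,
        hlen, hqc⟩
    · refine ⟨a :: y :: z :: t, Sublist.refl _, rfl, rfl, hch.cons_cons hay, by simp, ?_, hq⟩
      exact ⟨hy (cons_ne_nil _ _), fun h => ha (h ▸ by simp), haz⟩

theorem exists_chordless_sublist :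
    ∀ {p : List α}, p.Nodup → p.IsChain r → p.IsChain₃ (fun _ y _ => P y) → 2 ≤ p.length →
      ∃ q, q <+ p ∧ q.head? = p.head? ∧ q.getLast? = p.getLast? ∧ q.IsChain r ∧
        2 ≤ q.length ∧ q.IsChain₃ (fun x y z => P y ∧ x ≠ z ∧ ¬ r x z)
  | [a, y], _, hch, _, _ => ⟨[a, y], Sublist.refl _, rfl, rfl, hch, le_rfl, trivial⟩
  | a :: y :: z :: t, hnd, hch, hP, _ => by
    obtain ⟨q, hsub, hhead, hlast, hqch, hlen, hqc⟩ :=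
      exists_chordless_sublist hnd.of_cons hch.tail hP.2 (by simp)
    obtain ⟨y', t', rfl⟩ : ∃ y' t', q = y' :: t' := exists_cons_of_length_pos (by omega)
    obtain rfl : y' = y := by simpa using hhead
    obtain ⟨q', hsub', hhead', hlast', hqch', hlen', hqc'⟩ :=
      exists_chordless_sublist_cons a t' y' (fun h => (nodup_cons.1 hnd).1 (hsub.subset h))
        (isChain_cons_cons.1 hch).1 (fun _ => hP.1) hqch hqc
    exact ⟨q', hsub'.trans (hsub.cons_cons a), hhead', by simpa [hlast] using hlast', hqch', hlen',
      hqc'⟩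

end Chordless

end List

namespace MixedGraph

variable {V : Type*}

theorem adj_symm {G : MixedGraph V} {i j : V} : G.adj i j → G.adj j i := by
  rintro (h | h | h | h)
  exacts [Or.inl (G.line_symm _ _ h), Or.inr (Or.inr (Or.inl h)), Or.inr (Or.inl h),
    Or.inr (Or.inr (Or.inr (G.arc_symm _ _ h)))]

theorem adj_comm (G : MixedGraph V) (i j : V) : G.adj i j ↔ G.adj j i :=
  ⟨adj_symm, adj_symm⟩

theorem adj_irrefl (G : MixedGraph V) (i : V) : ¬ G.adj i i := by
  rintro (h | h | h | h)
  exacts [G.line_irrefl i h, G.arrow_irrefl i h, G.arrow_irrefl i h, G.arc_irrefl i h]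

theorem ne_of_adj {G : MixedGraph V} {i j : V} (h : G.adj i j) : i ≠ j := by
  rintro rfl
  exact G.adj_irrefl i h

def skeleton (G : MixedGraph V) : SimpleGraph V where
  Adj := G.adj
  symm := ⟨fun _ _ => adj_symm⟩
  loopless := ⟨G.adj_irrefl⟩

@[simp]
theorem skeleton_adj {G : MixedGraph V} {i j : V} : G.skeleton.Adj i j ↔ G.adj i j :=
  Iff.rfl

def activeTriple (G : MixedGraph V) (C : Set V) (a b c : V) : Prop :=
  (G.collider a b c → b ∈ C ∨ ∃ x ∈ C, G.anc b x) ∧ (¬ G.collider a b c → b ∉ C)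

theorem innerOK_iff_isChain₃ (G : MixedGraph V) (C : Set V) :
    ∀ p : List V, G.innerOK C p ↔ p.IsChain₃ (G.activeTriple C)
  | _ :: b :: c :: l => and_congr Iff.rfl (innerOK_iff_isChain₃ G C (b :: c :: l))
  | [] | [_] | [_, _] => Iff.rfl

theorem not_mSep_of_adj {G : MixedGraph V} {a b : V} (h : G.adj a b) (C : Set V) :
    ¬ G.mSep {a} {b} C := fun hsep =>
  hsep ⟨a, b, [a, b], rfl, rfl, ⟨by simp [ne_of_adj h], List.isChain_pair.2 h⟩, le_rfl, rfl, rfl,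
    trivial⟩

namespace isBG

variable {G : MixedGraph V} {C : Set V} {a b c : V}

theorem arc_of_adj (hG : G.isBG) (h : G.adj a b) : G.arc a b := by
  rcases h with h | h | h | h
  exacts [absurd h (hG.2 a b), absurd h (hG.1 a b), absurd h (hG.1 b a), h]

theorem anc_iff (hG : G.isBG) : G.anc a b ↔ a = b := by
  refine ⟨fun h => ?_, fun h => h ▸ .refl⟩
  induction h with
  | refl => rfl
  | tail _ h _ => exact absurd h (hG.1 _ _)

theorem collider_of_adj (hG : G.isBG) (hab : G.adj a b) (hbc : G.adj b c) : G.collider a b c :=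
  ⟨.inr (hG.arc_of_adj hab), .inr (hG.arc_of_adj (adj_symm hbc))⟩

theorem activeTriple_iff (hG : G.isBG) (hab : G.adj a b) (hbc : G.adj b c) :
    G.activeTriple C a b c ↔ b ∈ C := by
  simp [activeTriple, hG.collider_of_adj hab hbc, hG.anc_iff]

theorem mConnecting_iff (hG : G.isBG) {p : List V} :
    G.mConnecting C a b p ↔ G.isPath p ∧ 2 ≤ p.length ∧ p.head? = some a ∧
      p.getLast? = some b ∧ p.IsChain₃ (fun _ y _ => y ∈ C) := by
  simp only [mConnecting, innerOK_iff_isChain₃]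
  refine ⟨fun ⟨hp, hlen, hhead, hlast, h⟩ => ⟨hp, hlen, hhead, hlast, ?_⟩,
    fun ⟨hp, hlen, hhead, hlast, h⟩ => ⟨hp, hlen, hhead, hlast, ?_⟩⟩
  · exact h.imp_of_isChain (r := G.adj) (fun _ _ _ hab hbc => (hG.activeTriple_iff hab hbc).1) hp.2
  · exact h.imp_of_isChain (r := G.adj) (fun _ _ _ hab hbc => (hG.activeTriple_iff hab hbc).2) hp.2

theorem mSep_empty (hG : G.isBG) (h : ¬ G.adj a b) : G.mSep {a} {b} ∅ := by
  rintro ⟨_, _, p, rfl, rfl, hp⟩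
  obtain ⟨⟨-, hch⟩, hlen, hhead, hlast, hin⟩ := hG.mConnecting_iff.1 hp
  match p with
  | [x, y] =>
    obtain rfl : x = _ := by simpa using hhead
    obtain rfl : y = _ := by simpa using hlast
    exact h (List.isChain_pair.1 hch)
  | _ :: _ :: _ :: _ => exact hin.1

end isBG

namespace isDAG

variable {D : MixedGraph V} {a b : V}

theorem arrow_of_headAt (hD : D.isDAG) (h : D.headAt a b) : D.arrow a b :=
  h.resolve_right (hD.2.1 a b)

theorem arrow_or_arrow (hD : D.isDAG) (h : D.adj a b) : D.arrow a b ∨ D.arrow b a := by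
  rcases h with h | h | h | h
  exacts [absurd h (hD.1 a b), .inl h, .inr h, absurd h (hD.2.1 a b)]

theorem not_arrow_of_arrow (hD : D.isDAG) (h : D.arrow a b) : ¬ D.arrow b a :=
  fun h' => hD.2.2 a (.head h (.single h'))

theorem not_anc_of_anc (hD : D.isDAG) (hab : a ≠ b) (h : D.anc a b) : ¬ D.anc b a :=
  fun h' => hD.2.2 a (((Relation.reflTransGen_iff_eq_or_transGen.1 h).resolve_left
    hab.symm).trans_left h')

/-- Once the path leaves `b` along an arrow it stays among the descendants of `b`: its first
collider would be an ancestor of a parent of `b`. -/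
theorem anc_getLast_of_arrow (hD : D.isDAG) :
    ∀ (rest : List V) (prev v : V), (prev :: v :: rest).IsChain D.adj →
      (prev :: v :: rest).IsChain₃ (D.activeTriple {x | D.arrow x b}) → D.arrow prev v →
      D.anc b v → ∀ z ∈ (v :: rest).getLast?, D.anc b z
  | [], _, _, _, _, _, hbv => by simpa using hbv
  | w :: rest, _, v, hch, hact, hpv, hbv => by
    have hvw : D.arrow v w := by
      refine (hD.arrow_or_arrow (List.isChain_cons_cons.1 hch.tail).1).resolve_right fun hwv => ?_
      rcases hact.1.1 ⟨.inl hpv, .inl hwv⟩ with hvb | ⟨x, hxb, hvx⟩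
      · exact hD.2.2 b (.tail' hbv hvb)
      · exact hD.2.2 b (.tail' (hbv.trans hvx) hxb)
    rw [List.getLast?_cons_cons]
    exact hD.anc_getLast_of_arrow rest v w hch.tail hact.2 hvw (hbv.tail hvw)

theorem mSep_parents (hD : D.isDAG) (hab : ¬ D.adj a b) (hba : ¬ D.anc b a) :
    D.mSep {b} {a} {x | D.arrow x b} := by
  rintro ⟨i, j, p, hi, hj, ⟨-, hch⟩, hlen, hhead, hlast, hok⟩
  subst i j
  rw [innerOK_iff_isChain₃] at hok
  match p with
  | b' :: v :: rest =>
    have : b' = b := by simpa using hhead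
    subst b'
    have hbv : D.arrow b v := by
      refine (hD.arrow_or_arrow (List.isChain_cons_cons.1 hch).1).resolve_right fun hvb => ?_
      cases rest with
      | nil =>
        obtain rfl : v = a := by simpa using hlast
        exact hab (.inr (.inl hvb))
      | cons w rest =>
        exact hok.1.2 (fun hcol => hD.not_arrow_of_arrow hvb (hD.arrow_of_headAt hcol.1)) hvb
    rw [List.getLast?_cons_cons] at hlast
    exact hba (hD.anc_getLast_of_arrow rest b v hch hok hbv (.single hbv) a hlast)

end isDAG

namespace markovEquiv

variable {G D : MixedGraph V} {a b c : V}

theorem adj_of_isDAG (heq : G.markovEquiv D) (hD : D.isDAG) (h : G.adj a b) : D.adj a b := by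
  have hsep : ∀ {x y}, G.adj x y → ¬ D.adj x y → ¬ D.anc y x → False := fun {x y} hxy hn hyx =>
    not_mSep_of_adj (adj_symm hxy) _ <| (heq {y} {x} {z | D.arrow z y}
      (Set.disjoint_singleton.2 (ne_of_adj hxy).symm)
      (Set.disjoint_singleton_left.2 (D.arrow_irrefl _))
      (Set.disjoint_singleton_left.2 fun h => hn (.inr (.inl h)))).2 (hD.mSep_parents hn hyx)
  by_contra hn
  by_cases hba : D.anc b a
  · exact hsep (adj_symm h) (fun h' => hn (adj_symm h')) (hD.not_anc_of_anc (ne_of_adj h).symm hba)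
  · exact hsep h hn hba

theorem arrow_arrow_of_unshielded (heq : G.markovEquiv D) (hG : G.isBG) (hD : D.isDAG)
    (hab : G.adj a b) (hbc : G.adj b c) (hac : a ≠ c) (hnac : ¬ G.adj a c) :
    D.arrow a b ∧ D.arrow c b := by
  have hsep : D.mSep {a} {c} ∅ := (heq _ _ _ (Set.disjoint_singleton.2 hac)
    (Set.disjoint_empty _) (Set.disjoint_empty _)).1 (hG.mSep_empty hnac)
  by_contra hcol
  refine hsep ⟨a, c, [a, b, c], rfl, rfl, ⟨?_, ?_⟩, by simp, rfl, rfl, ⟨?_, fun _ => id⟩, trivial⟩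
  · simp [ne_of_adj hab, ne_of_adj hbc, hac]
  · exact (List.isChain_pair.2 (heq.adj_of_isDAG hD hbc)).cons_cons (heq.adj_of_isDAG hD hab)
  · exact fun h => absurd ⟨hD.arrow_of_headAt h.1, hD.arrow_of_headAt h.2⟩ hcol

theorem not_inducedP4 (heq : G.markovEquiv D) (hG : G.isBG) (hD : D.isDAG) :
    ¬ inducedP4 G.adj := by
  rintro ⟨a, b, c, d, -, hac, -, -, hbd, -, hab, hbc, hcd, hnac, -, hnbd⟩
  exact hD.not_arrow_of_arrow (heq.arrow_arrow_of_unshielded hG hD hab hbc hac hnac).2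
    (heq.arrow_arrow_of_unshielded hG hD hbc hcd hbd hnbd).1

theorem not_inducedC4 (heq : G.markovEquiv D) (hG : G.isBG) (hD : D.isDAG) :
    ¬ inducedC4 G.adj := by
  rintro ⟨a, b, c, d, -, hac, -, -, hbd, -, hab, hbc, hcd, -, hnac, hnbd⟩
  exact hD.not_arrow_of_arrow (heq.arrow_arrow_of_unshielded hG hD hab hbc hac hnac).2
    (heq.arrow_arrow_of_unshielded hG hD hbc hcd hbd hnbd).1

end markovEquiv

def closedNbhd (G : MixedGraph V) (v : V) : Set V := {x | x = v ∨ G.adj v x}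

theorem self_mem_closedNbhd (G : MixedGraph V) (v : V) : v ∈ G.closedNbhd v := .inl rfl

theorem mem_closedNbhd_of_adj {G : MixedGraph V} {v x : V} (h : G.adj v x) :
    x ∈ G.closedNbhd v :=
  .inr h

theorem mem_closedNbhd_comm {G : MixedGraph V} {x y : V} :
    x ∈ G.closedNbhd y ↔ y ∈ G.closedNbhd x := by
  simp only [closedNbhd, Set.mem_ofPred_eq, eq_comm, G.adj_comm y x]

theorem closedNbhd_subset_or_subset {G : MixedGraph V} (hP4 : ¬ inducedP4 G.adj)
    (hC4 : ¬ inducedC4 G.adj) {i j : V} (hij : G.adj i j) :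
    G.closedNbhd i ⊆ G.closedNbhd j ∨ G.closedNbhd j ⊆ G.closedNbhd i := by
  refine or_iff_not_imp_left.2 fun hij' y hy => ?_
  by_contra hyi
  obtain ⟨x, hxi, hxj⟩ := Set.not_subset.1 hij'
  simp only [closedNbhd, Set.mem_ofPred_eq, not_or] at hxi hxj hy hyi
  have hix : G.adj i x := hxi.resolve_left fun h => hxj.2 (h ▸ adj_symm hij)
  have hjy : G.adj j y := hy.resolve_left fun h => hyi.2 (h ▸ hij)
  have hxy : x ≠ y := fun h => hyi.2 (h ▸ hix)
  have hnxj : ¬ G.adj x j := fun h => hxj.2 (adj_symm h)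
  by_cases hadj : G.adj x y
  · exact hC4 ⟨x, i, j, y, (ne_of_adj hix).symm, hxj.1, hxy, ne_of_adj hij, fun h => hyi.1 h.symm,
      ne_of_adj hjy, adj_symm hix, hij, hjy, adj_symm hadj, hnxj, hyi.2⟩
  · exact hP4 ⟨x, i, j, y, (ne_of_adj hix).symm, hxj.1, hxy, ne_of_adj hij, fun h => hyi.1 h.symm,
      ne_of_adj hjy, adj_symm hix, hij, hjy, hnxj, hadj, hyi.2⟩

def stepInto (G : MixedGraph V) (C : Set V) (x y : V) : Prop :=
  G.adj x y ∧ y ∈ C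

/-- There is a walk from `a` to `b` all of whose inner nodes lie in `C`. -/
def reachesThrough (G : MixedGraph V) (C : Set V) (a b : V) : Prop :=
  ∃ w, Relation.ReflTransGen (G.stepInto C) a w ∧ w ∈ G.closedNbhd b

theorem exists_walk_of_reflTransGen {G : MixedGraph V} {C : Set V} {a u : V}
    (h : Relation.ReflTransGen (G.stepInto C) a u) :
    ∃ W : G.skeleton.Walk a u, ∀ x ∈ W.support, x = a ∨ x ∈ C := by
  induction h with
  | refl => exact ⟨.nil, by simp⟩
  | tail _ hstep ih =>
    obtain ⟨W, hW⟩ := ih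
    refine ⟨W.concat (skeleton_adj.2 hstep.1), fun x hx => ?_⟩
    rw [SimpleGraph.Walk.support_concat, List.mem_append, List.mem_singleton] at hx
    rcases hx with hx | rfl
    exacts [hW x hx, .inr hstep.2]

theorem reachesThrough.exists_path {G : MixedGraph V} {C : Set V} {a b : V}
    (h : G.reachesThrough C a b) (hab : a ≠ b) :
    ∃ p, G.isPath p ∧ 2 ≤ p.length ∧ p.head? = some a ∧ p.getLast? = some b ∧
      p.IsChain₃ (fun _ y _ => y ∈ C) := by
  classical
  obtain ⟨w, hw, hwb⟩ := h
  obtain ⟨W, hW⟩ := exists_walk_of_reflTransGen hw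
  obtain ⟨W', hW'⟩ : ∃ W' : G.skeleton.Walk a b, ∀ x ∈ W'.support, x = a ∨ x ∈ C ∨ x = b := by
    rcases hwb with rfl | hbw
    · exact ⟨W, fun x hx => (hW x hx).imp_right .inl⟩
    · refine ⟨W.concat (skeleton_adj.2 (adj_symm hbw)), fun x hx => ?_⟩
      rw [SimpleGraph.Walk.support_concat, List.mem_append, List.mem_singleton] at hx
      rcases hx with hx | rfl
      exacts [(hW x hx).imp_right .inl, .inr (.inr rfl)]
  set P := W'.bypass
  have hhead : P.support.head? = some a := by rw [← P.cons_tail_support]; rfl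
  have hlast : P.support.getLast? = some b := by
    rw [List.getLast?_eq_some_getLast P.support_ne_nil, P.getLast_support]
  have hlen : P.length ≠ 0 := fun h => hab (SimpleGraph.Walk.eq_of_length_eq_zero h)
  have hnd := W'.bypass_isPath.support_nodup
  refine ⟨P.support, ⟨hnd, P.isChain_adj_support⟩, by rw [P.length_support]; omega, hhead, hlast,
    List.isChain₃_of_nodup hnd hhead hlast fun x hx => hW' x (W'.support_bypass_subset_support hx)⟩

def orient {α : Type*} [Preorder α] (G : MixedGraph V) (key : V → α) : MixedGraph V where
  line _ _ := False
  arrow i j := G.adj i j ∧ key i < key j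
  arc _ _ := False
  line_symm _ _ := id
  arc_symm _ _ := id
  line_irrefl _ := id
  arrow_irrefl i h := lt_irrefl (key i) h.2
  arc_irrefl _ := id

theorem orient_isDAG {α : Type*} [Preorder α] (G : MixedGraph V) (key : V → α) :
    (G.orient key).isDAG := by
  have hlt {i j : V} (h : Relation.TransGen (G.orient key).arrow i j) : key i < key j := by
    induction h with
    | single h => exact h.2
    | tail _ h ih => exact ih.trans h.2
  exact ⟨fun _ _ => id, fun _ _ => id, fun i h => lt_irrefl (key i) (hlt h)⟩

def closedNbhdMonotone {α : Type*} [Preorder α] (G : MixedGraph V) (key : V → α) : Prop :=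
  ∀ i j, G.adj i j → key i < key j → G.closedNbhd i ⊆ G.closedNbhd j

section Orient

variable {α : Type*} [LinearOrder α] {G : MixedGraph V} {key : V → α} {C : Set V}

theorem orient_adj (hkey : key.Injective) {i j : V} : (G.orient key).adj i j ↔ G.adj i j := by
  refine ⟨?_, fun h => ?_⟩
  · rintro (h | h | h | h)
    exacts [h.elim, h.1, adj_symm h.1, h.elim]
  · rcases lt_or_gt_of_ne (hkey.ne (ne_of_adj h)) with hlt | hlt
    exacts [.inr (.inl ⟨h, hlt⟩), .inr (.inr (.inl ⟨adj_symm h, hlt⟩))]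

theorem orient_arrow_or_arrow (hkey : key.Injective) {i j : V} (h : G.adj i j) :
    (G.orient key).arrow i j ∨ (G.orient key).arrow j i :=
  (G.orient_isDAG key).arrow_or_arrow ((orient_adj hkey).2 h)

theorem closedNbhd_subset_of_anc (hnest : G.closedNbhdMonotone key) {i j : V}
    (h : (G.orient key).anc i j) : G.closedNbhd i ⊆ G.closedNbhd j := by
  induction h with
  | refl => exact subset_rfl
  | tail _ h ih => exact ih.trans (hnest _ _ h.1 h.2)

theorem orient_arrow_of_not_adj (hkey : key.Injective) (hnest : G.closedNbhdMonotone key)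
    {x b y : V} (hxb : G.adj x b) (hby : G.adj b y) (hxy : x ≠ y) (hn : ¬ G.adj x y) :
    (G.orient key).arrow x b :=
  (orient_arrow_or_arrow hkey hxb).resolve_right fun hbx => by
    rcases hnest b x hbx.1 hbx.2 (mem_closedNbhd_of_adj hby) with h | h
    exacts [hxy h.symm, hn h]

theorem orient_activeTriple_of_chordless (hkey : key.Injective) (hnest : G.closedNbhdMonotone key)
    {a b c : V} (hab : G.adj a b) (hbc : G.adj b c) (hac : a ≠ c) (hnac : ¬ G.adj a c)
    (hb : b ∈ C) : (G.orient key).activeTriple C a b c :=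
  ⟨fun _ => .inl hb, fun hncol => (hncol
    ⟨.inl (orient_arrow_of_not_adj hkey hnest hab hbc hac hnac),
      .inl (orient_arrow_of_not_adj hkey hnest (adj_symm hbc) (adj_symm hab) hac.symm
        fun h => hnac (adj_symm h))⟩).elim⟩

/-- Invariant along a d-connecting path `prev, v, …, b`: `u` is reached from `a` through `C` and
`u ∈ N[v]`; unless `v` is entered by an arrowhead, even `N[v] ⊆ N[u]`. -/
theorem reachesThrough_of_isChain₃ (hkey : key.Injective) (hnest : G.closedNbhdMonotone key)
    {a b : V} : ∀ (rest : List V) (prev v u : V), (prev :: v :: rest).IsChain G.adj →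
      (prev :: v :: rest).IsChain₃ ((G.orient key).activeTriple C) →
      (v :: rest).getLast? = some b → Relation.ReflTransGen (G.stepInto C) a u →
      u ∈ G.closedNbhd v → (¬ (G.orient key).arrow prev v → G.closedNbhd v ⊆ G.closedNbhd u) →
      G.reachesThrough C a b
  | [], _, v, u, _, _, hlast, hau, huv, _ => by
    obtain rfl : v = b := by simpa using hlast
    exact ⟨u, hau, huv⟩
  | w :: rest, prev, v, u, hch, hact, hlast, hau, huv, hdown => by
    rw [List.getLast?_cons_cons] at hlast
    have hvw : G.adj v w := (List.isChain_cons_cons.1 hch.tail).1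
    by_cases hcol : (G.orient key).arrow prev v ∧ (G.orient key).arrow w v
    · obtain ⟨c, hcC, hvc⟩ : ∃ c ∈ C, G.closedNbhd v ⊆ G.closedNbhd c := by
        rcases hact.1.1 ⟨.inl hcol.1, .inl hcol.2⟩ with hv | ⟨c, hc, hvc⟩
        exacts [⟨v, hv, subset_rfl⟩, ⟨c, hc, closedNbhd_subset_of_anc hnest hvc⟩]
      have hac : Relation.ReflTransGen (G.stepInto C) a c := by
        rcases hvc huv with rfl | huc
        exacts [hau, hau.tail ⟨adj_symm huc, hcC⟩]
      have hwc : G.closedNbhd w ⊆ G.closedNbhd c := (hnest w v hcol.2.1 hcol.2.2).trans hvc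
      exact reachesThrough_of_isChain₃ hkey hnest rest v w c hch.tail hact.2 hlast hac
        (mem_closedNbhd_comm.1 (hwc (self_mem_closedNbhd G w))) fun _ => hwc
    · by_cases hvw' : (G.orient key).arrow v w
      · exact reachesThrough_of_isChain₃ hkey hnest rest v w u hch.tail hact.2 hlast hau
          (hnest v w hvw'.1 hvw'.2 huv) fun h => absurd hvw' h
      · have hwv := (orient_arrow_or_arrow hkey hvw).resolve_left hvw'
        have hwu : G.closedNbhd w ⊆ G.closedNbhd u :=
          (hnest w v hwv.1 hwv.2).trans (hdown fun hpv => hcol ⟨hpv, hwv⟩)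
        exact reachesThrough_of_isChain₃ hkey hnest rest v w u hch.tail hact.2 hlast hau
          (mem_closedNbhd_comm.1 (hwu (self_mem_closedNbhd G w))) fun _ => hwu

theorem exists_mConnecting_orient_iff (hG : G.isBG) (hkey : key.Injective)
    (hnest : G.closedNbhdMonotone key) {a b : V} :
    (∃ p, G.mConnecting C a b p) ↔ ∃ p, (G.orient key).mConnecting C a b p := by
  constructor
  · rintro ⟨p, hp⟩
    obtain ⟨⟨hnd, hch⟩, hlen, hhead, hlast, hin⟩ := hG.mConnecting_iff.1 hp
    obtain ⟨q, hqp, hqhead, hqlast, hqch, hqlen, hq⟩ :=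
      List.exists_chordless_sublist hnd hch hin hlen
    refine ⟨q, ⟨hnd.sublist hqp, hqch.imp fun _ _ => (orient_adj hkey).2⟩, hqlen,
      hqhead.trans hhead, hqlast.trans hlast, ?_⟩
    rw [innerOK_iff_isChain₃]
    exact hq.imp_of_isChain (r := G.adj) (fun _ _ _ hxy hyz ⟨hy, hxz, hnxz⟩ =>
      orient_activeTriple_of_chordless hkey hnest hxy hyz hxz hnxz hy) hqch
  · rintro ⟨p, ⟨hnd, hch⟩, hlen, hhead, hlast, hok⟩
    match p with
    | a' :: v :: rest =>
      have : a' = a := by simpa using hhead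
      subst a'
      rw [List.getLast?_cons_cons] at hlast
      have hchG : (a :: v :: rest).IsChain G.adj := hch.imp fun _ _ => (orient_adj hkey).1
      have hav : G.adj a v := (List.isChain_cons_cons.1 hchG).1
      have hab : a ≠ b := fun h => (List.nodup_cons.1 hnd).1 (h ▸ List.mem_of_getLast? hlast)
      have hreach := reachesThrough_of_isChain₃ hkey hnest rest a v a hchG
        ((innerOK_iff_isChain₃ _ _ _).1 hok) hlast .refl (mem_closedNbhd_of_adj (adj_symm hav))
        fun h => have hva := (orient_arrow_or_arrow hkey hav).resolve_left h
          hnest v a hva.1 hva.2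
      obtain ⟨q, hq⟩ := hreach.exists_path hab
      exact ⟨q, hG.mConnecting_iff.2 hq⟩

theorem markovEquiv_orient (hG : G.isBG) (hkey : key.Injective) (hnest : G.closedNbhdMonotone key) :
    G.markovEquiv (G.orient key) := by
  intro A B C _ _ _
  refine not_congr ⟨fun ⟨i, j, p, hi, hj, hp⟩ => ?_, fun ⟨i, j, p, hi, hj, hp⟩ => ?_⟩
  · obtain ⟨q, hq⟩ := (exists_mConnecting_orient_iff hG hkey hnest).1 ⟨p, hp⟩
    exact ⟨i, j, q, hi, hj, hq⟩
  · obtain ⟨q, hq⟩ := (exists_mConnecting_orient_iff hG hkey hnest).2 ⟨p, hp⟩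
    exact ⟨i, j, q, hi, hj, hq⟩

end Orient

noncomputable def nbhdKey [Fintype V] (G : MixedGraph V) (v : V) : ℕ ×ₗ Fin (Fintype.card V) :=
  toLex ((G.closedNbhd v).ncard, Fintype.equivFin V v)

theorem nbhdKey_injective [Fintype V] (G : MixedGraph V) : G.nbhdKey.Injective :=
  fun _ _ h => (Fintype.equivFin V).injective (congrArg Prod.snd (toLex.injective h))

theorem closedNbhdMonotone_nbhdKey [Fintype V] {G : MixedGraph V} (hP4 : ¬ inducedP4 G.adj)
    (hC4 : ¬ inducedC4 G.adj) : G.closedNbhdMonotone G.nbhdKey := by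
  intro i j hij hlt
  rcases closedNbhd_subset_or_subset hP4 hC4 hij with hij' | hji
  · exact hij'
  · have hcard : (G.closedNbhd i).ncard ≤ (G.closedNbhd j).ncard := by
      rcases Prod.Lex.toLex_lt_toLex.1 hlt with h | ⟨h, -⟩
      exacts [h.le, h.le]
    exact (Set.eq_of_subset_of_ncard_le hji hcard).superset

end MixedGraph

/-- A bidirected graph is Markov equivalent to some DAG iff it contains no
induced `P₄` and no induced `C₄`. -/
theorem bg_equiv_some_dag_iff {V : Type*} [Fintype V] (G : MixedGraph V)
    (hG : G.isBG) :
    (∃ D : MixedGraph V, D.isDAG ∧ G.markovEquiv D) ↔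
      (¬ inducedP4 G.adj ∧ ¬ inducedC4 G.adj) := by
  constructor
  · rintro ⟨D, hD, heq⟩
    exact ⟨heq.not_inducedP4 hG hD, heq.not_inducedC4 hG hD⟩
  · rintro ⟨hP4, hC4⟩
    exact ⟨G.orient G.nbhdKey, G.orient_isDAG _, MixedGraph.markovEquiv_orient hG
      G.nbhdKey_injective (MixedGraph.closedNbhdMonotone_nbhdKey hP4 hC4)⟩
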